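/- Let A be the symmetric 3×3 matrix with rows (6,2,1), (2,5,3), (1,3,4), and define ξ : ℝ³ → ℝ by ξ(x) = (x·Ax)/2. Then ξ is convex on ℝ³, and there exists a probability measure μ on ℝ_+³, uniform on three points, such that ∫ ξ* dμ↑ > ∫ ξ* dμ. -/

import Mathlib

open MeasureTheory
open scoped ENNReal

/-- The nonnegative orthant `ℝ_+^D` in `ℝ^D`. -/
def orthant (D : ℕ) : Set (EuclideanSpace ℝ (Fin D)) := {x | ∀ i, 0 ≤ x i}

/-- The monotone conjugate `ξ*(y) = sup_{x ∈ ℝ_+^D} (x·y − ξ(x))`, valued in `[0, +∞]`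
(this agrees with the usual monotone conjugate at every point where the latter is
nonnegative, in particular everywhere on `ℝ_+^D` when `ξ(0) = 0`). -/
noncomputable def monotoneConjNN (D : ℕ) (ξ : EuclideanSpace ℝ (Fin D) → ℝ)
    (y : EuclideanSpace ℝ (Fin D)) : ℝ≥0∞ :=
  ⨆ x : orthant D, ENNReal.ofReal ((inner ℝ x.1 y : ℝ) - ξ x.1)

/-- The generalized inverse `F_d^{-1}(u) = inf {t ≥ 0 : F_d(t) ≥ u}` of the cumulative
distribution function of the `d`-th marginal of `μ`. -/
noncomputable def cdfInv (D : ℕ) (μ : Measure (EuclideanSpace ℝ (Fin D))) (d : Fin D)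
    (u : ℝ) : ℝ :=
  sInf {t : ℝ | 0 ≤ t ∧ u ≤ (μ {x : EuclideanSpace ℝ (Fin D) | x d ≤ t}).toReal}

/-- The monotone rearrangement `μ↑` of a measure `μ` on `ℝ_+^D`: the law of
`(F₁^{-1}(U), …, F_D^{-1}(U))` with `U` uniform on `(0,1)`. -/
noncomputable def monotoneRearrangement (D : ℕ) (μ : Measure (EuclideanSpace ℝ (Fin D))) :
    Measure (EuclideanSpace ℝ (Fin D)) :=
  Measure.map (fun u : ℝ => (WithLp.toLp 2 (fun d => cdfInv D μ d u) : EuclideanSpace ℝ (Fin D)))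
    (volume.restrict (Set.Ioo (0 : ℝ) 1))

/-- The symmetric matrix `A` with rows `(6,2,1)`, `(2,5,3)`, `(1,3,4)`. -/
def Amat : Matrix (Fin 3) (Fin 3) ℝ := !![6, 2, 1; 2, 5, 3; 1, 3, 4]

/-- The quadratic form `ξ(x) = (x·Ax)/2` on `ℝ³`. -/
noncomputable def quadForm (x : EuclideanSpace ℝ (Fin 3)) : ℝ :=
  (∑ i, ∑ j, Amat i j * x i * x j) / 2

/-!
Take `μ` uniform on `0`, `(4,4,0)` and `(3,4,3)`. Sorting every coordinate separately, `μ↑` is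
uniform on `0`, `(3,4,0)` and `(4,4,3)`: the rearrangement moves the third coordinate `3` from the
point `(3,4,·)` to the point `(4,4,·)`. As `ξ ≥ 0`, `ξ*(0) = 0`, and the other four values of `ξ*`
are pinned down by maximising the concave quadratic `x·y − ξ(x)` over the orthant:
`ξ*(4,4,0) + ξ*(3,4,3) ≤ 28/13 + 215/114 < 93/52 + 43/19 ≤ ξ*(3,4,0) + ξ*(4,4,3)`.
Convexity of `ξ` is positive semidefiniteness of `A`.
-/

open Set

section UniformOnThree

variable {α : Type*} [MeasurableSpace α]

noncomputable def uniformOnThree (a b c : α) : Measure α :=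
  (3 : ℝ≥0∞)⁻¹ • (Measure.dirac a + Measure.dirac b + Measure.dirac c)

theorem lintegral_uniformOnThree [MeasurableSingletonClass α] (f : α → ℝ≥0∞) (a b c : α) :
    ∫⁻ x, f x ∂uniformOnThree a b c = 3⁻¹ * (f a + f b + f c) := by
  rw [uniformOnThree, lintegral_smul_measure, lintegral_add_measure, lintegral_add_measure,
    lintegral_dirac, lintegral_dirac, lintegral_dirac, smul_eq_mul]

theorem uniformOnThree_apply_toReal {s : Set α} (hs : MeasurableSet s) (a b c : α) :
    (uniformOnThree a b c s).toReal =
      (s.indicator (1 : α → ℝ) a + s.indicator 1 b + s.indicator 1 c) / 3 := by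
  simp only [uniformOnThree, Measure.smul_apply, Measure.add_apply, Measure.dirac_apply' _ hs,
    smul_eq_mul]
  by_cases ha : a ∈ s <;> by_cases hb : b ∈ s <;> by_cases hc : c ∈ s <;>
    norm_num [ha, hb, hc, ENNReal.toReal_inv]

theorem map_restrict_eq_smul_dirac {β : Type*} [MeasurableSpace β] {μ : Measure β} {s : Set β}
    (hs : MeasurableSet s) {g : β → α} {z : α} (hg : ∀ u ∈ s, g u = z) :
    (μ.restrict s).map g = μ s • Measure.dirac z := by
  rw [Measure.map_congr (ae_restrict_of_forall_mem hs hg), Measure.map_const,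
    Measure.restrict_apply_univ]

theorem map_volume_Ioo_eq_uniformOnThree {g : ℝ → α}
    {z₀ z₁ z₂ : α} (h₀ : ∀ u ∈ Ioc (0 : ℝ) (1 / 3), g u = z₀)
    (h₁ : ∀ u ∈ Ioc (1 / 3 : ℝ) (2 / 3), g u = z₁) (h₂ : ∀ u ∈ Ioo (2 / 3 : ℝ) 1, g u = z₂) :
    (volume.restrict (Ioo (0 : ℝ) 1)).map g = uniformOnThree z₀ z₁ z₂ := by
  have hsplit : Ioo (0 : ℝ) 1 = Ioc 0 (1 / 3) ∪ Ioc (1 / 3) (2 / 3) ∪ Ioo (2 / 3) 1 := by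
    rw [Ioc_union_Ioc_eq_Ioc (by norm_num) (by norm_num),
      Ioc_union_Ioo_eq_Ioo (by norm_num) (by norm_num)]
  have hdisj₀₁ : Disjoint (Ioc (0 : ℝ) (1 / 3)) (Ioc (1 / 3) (2 / 3)) :=
    Ioc_disjoint_Ioc_of_le le_rfl
  have hdisj₀₁₂ : Disjoint (Ioc (0 : ℝ) (1 / 3) ∪ Ioc (1 / 3) (2 / 3)) (Ioo (2 / 3) 1) := by
    rw [Ioc_union_Ioc_eq_Ioc (by norm_num) (by norm_num)]
    exact disjoint_left.2 fun u hu hu' => (not_lt_of_ge hu.2) hu'.1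
  have hthird : ∀ a b : ℝ, b - a = 1 / 3 → ENNReal.ofReal (b - a) = 3⁻¹ := by
    intro a b h
    rw [h, one_div, ENNReal.ofReal_inv_of_pos (by norm_num), ENNReal.ofReal_ofNat]
  have hae {s : Set ℝ} (hs : MeasurableSet s) {z : α} (hg : ∀ u ∈ s, g u = z) :
      AEMeasurable g (volume.restrict s) :=
    aemeasurable_const.congr (Filter.EventuallyEq.symm (ae_restrict_of_forall_mem hs hg))
  rw [hsplit, Measure.restrict_union hdisj₀₁₂ measurableSet_Ioo,
    Measure.restrict_union hdisj₀₁ measurableSet_Ioc,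
    AEMeasurable.map_add₀ ((hae measurableSet_Ioc h₀).add_measure (hae measurableSet_Ioc h₁))
      (hae measurableSet_Ioo h₂),
    AEMeasurable.map_add₀ (hae measurableSet_Ioc h₀) (hae measurableSet_Ioc h₁),
    map_restrict_eq_smul_dirac measurableSet_Ioc h₀,
    map_restrict_eq_smul_dirac measurableSet_Ioc h₁,
    map_restrict_eq_smul_dirac measurableSet_Ioo h₂, Real.volume_Ioc, Real.volume_Ioc,
    Real.volume_Ioo, hthird _ _ (by norm_num), hthird _ _ (by norm_num),
    hthird _ _ (by norm_num), uniformOnThree, smul_add, smul_add]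

end UniformOnThree

theorem cdfInv_uniformOnThree {D : ℕ} (a b c : EuclideanSpace ℝ (Fin D)) (d : Fin D) {k : ℕ}
    {u s : ℝ} (hs : 0 ≤ s) (hku : k / 3 < u) (huk : u ≤ (k + 1) / 3)
    (hle : k + 1 ≤ (if a d ≤ s then 1 else 0) + (if b d ≤ s then 1 else 0) +
      (if c d ≤ s then (1 : ℝ) else 0))
    (hlt : (if a d < s then 1 else 0) + (if b d < s then 1 else 0) +
      (if c d < s then (1 : ℝ) else 0) ≤ k) :
    cdfInv D (uniformOnThree a b c) d u = s := by
  have hF (t : ℝ) : (uniformOnThree a b c {x : EuclideanSpace ℝ (Fin D) | x d ≤ t}).toReal =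
      ((if a d ≤ t then 1 else 0) + (if b d ≤ t then 1 else 0) +
        (if c d ≤ t then (1 : ℝ) else 0)) / 3 := by
    rw [uniformOnThree_apply_toReal (measurableSet_le (by fun_prop) measurable_const)]
    simp only [indicator_apply, mem_ofPred_eq, Pi.one_apply]
  refine IsLeast.csInf_eq ⟨⟨hs, ?_⟩, fun t ⟨ht, htu⟩ => ?_⟩
  · rw [hF]
    linarith
  · by_contra! hts
    have hmono (v : ℝ) : (if v ≤ t then (1 : ℝ) else 0) ≤ if v < s then 1 else 0 := by
      by_cases hvt : v ≤ t
      · simp [hvt, hvt.trans_lt hts]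
      · simp only [hvt, if_false]
        split_ifs <;> norm_num
    rw [hF] at htu
    linarith [hmono (a d), hmono (b d), hmono (c d)]

theorem monotoneConjNN_le_ofReal {D : ℕ} {ξ : EuclideanSpace ℝ (Fin D) → ℝ}
    {y : EuclideanSpace ℝ (Fin D)} {c : ℝ} (h : ∀ x ∈ orthant D, inner ℝ x y - ξ x ≤ c) :
    monotoneConjNN D ξ y ≤ ENNReal.ofReal c :=
  iSup_le fun x => ENNReal.ofReal_le_ofReal (h x.1 x.2)

theorem ofReal_le_monotoneConjNN {D : ℕ} (ξ : EuclideanSpace ℝ (Fin D) → ℝ)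
    (y : EuclideanSpace ℝ (Fin D)) {x : EuclideanSpace ℝ (Fin D)} (hx : x ∈ orthant D) :
    ENNReal.ofReal (inner ℝ x y - ξ x) ≤ monotoneConjNN D ξ y :=
  le_iSup (fun x : orthant D => ENNReal.ofReal (inner ℝ x.1 y - ξ x.1)) ⟨x, hx⟩

theorem convexOn_univ_sum_sum_of_nonneg {ι : Type*} [Fintype ι] (M : Matrix ι ι ℝ)
    (hM : ∀ v : EuclideanSpace ℝ ι, 0 ≤ ∑ i, ∑ j, M i j * v i * v j) :
    ConvexOn ℝ univ fun x : EuclideanSpace ℝ ι => ∑ i, ∑ j, M i j * x i * x j := by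
  refine ⟨convex_univ, fun x _ y _ a b ha hb hab => ?_⟩
  obtain rfl : b = 1 - a := by linarith
  have key : a • (∑ i, ∑ j, M i j * x i * x j) + (1 - a) • (∑ i, ∑ j, M i j * y i * y j) -
      ∑ i, ∑ j, M i j * (a • x + (1 - a) • y) i * (a • x + (1 - a) • y) j =
      a * (1 - a) * ∑ i, ∑ j, M i j * (x - y) i * (x - y) j := by
    simp only [smul_eq_mul, Finset.mul_sum, ← Finset.sum_add_distrib, ← Finset.sum_sub_distrib,
      PiLp.add_apply, PiLp.smul_apply, PiLp.sub_apply]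
    exact Finset.sum_congr rfl fun i _ => Finset.sum_congr rfl fun j _ => by ring
  nlinarith [mul_nonneg (mul_nonneg ha hb) (hM (x - y))]

theorem sum_sum_Amat_mul (v : EuclideanSpace ℝ (Fin 3)) :
    ∑ i, ∑ j, Amat i j * v i * v j =
      6 * v 0 ^ 2 + 5 * v 1 ^ 2 + 4 * v 2 ^ 2 + 4 * v 0 * v 1 + 2 * v 0 * v 2 + 6 * v 1 * v 2 := by
  simp only [Amat, Matrix.of_apply, Matrix.cons_val', Matrix.cons_val_fin_one, Fin.sum_univ_three,
    Matrix.cons_val_zero, Matrix.cons_val_one, Matrix.cons_val]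
  ring

theorem sum_sum_Amat_mul_nonneg (v : EuclideanSpace ℝ (Fin 3)) :
    0 ≤ ∑ i, ∑ j, Amat i j * v i * v j := by
  rw [sum_sum_Amat_mul]
  -- the `LDLᵀ` decomposition of `A`
  nlinarith [sq_nonneg (v 0 + v 1 / 3 + v 2 / 6), sq_nonneg (v 1 + 6 / 13 * v 2), sq_nonneg (v 2)]

theorem quadForm_eq (x : EuclideanSpace ℝ (Fin 3)) :
    quadForm x =
      (6 * x 0 ^ 2 + 5 * x 1 ^ 2 + 4 * x 2 ^ 2 + 4 * x 0 * x 1 + 2 * x 0 * x 2 + 6 * x 1 * x 2) / 2 := by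
  rw [quadForm, sum_sum_Amat_mul]

theorem quadForm_nonneg (x : EuclideanSpace ℝ (Fin 3)) : 0 ≤ quadForm x :=
  div_nonneg (sum_sum_Amat_mul_nonneg x) zero_le_two

theorem convexOn_quadForm : ConvexOn ℝ univ quadForm := by
  have hq : quadForm = fun x => (1 / 2 : ℝ) • ∑ i, ∑ j, Amat i j * x i * x j := by
    funext x
    rw [quadForm, smul_eq_mul]
    ring
  rw [hq]
  exact (convexOn_univ_sum_sum_of_nonneg Amat sum_sum_Amat_mul_nonneg).smul (by norm_num)

theorem inner_eq_fin_three (x y : EuclideanSpace ℝ (Fin 3)) :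
    inner ℝ x y = x 0 * y 0 + x 1 * y 1 + x 2 * y 2 := by
  simp [PiLp.inner_apply, Fin.sum_univ_three, mul_comm]

theorem monotoneConjNN_quadForm_zero : monotoneConjNN 3 quadForm 0 = 0 := by
  refine nonpos_iff_eq_zero.1 (ENNReal.ofReal_zero ▸ monotoneConjNN_le_ofReal fun x _ => ?_)
  simp [quadForm_nonneg x]

theorem monotoneConjNN_quadForm_add_le :
    monotoneConjNN 3 quadForm !₂[4, 4, 0] + monotoneConjNN 3 quadForm !₂[3, 4, 3] ≤
      ENNReal.ofReal (28 / 13 + 215 / 114) := by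
  rw [ENNReal.ofReal_add (by norm_num) (by norm_num)]
  refine add_le_add (monotoneConjNN_le_ofReal fun x hx => ?_)
    (monotoneConjNN_le_ofReal fun x hx => ?_)
  -- The maximiser is `(6/13, 8/13, 0)`, on the face `x 2 = 0`; the squares are the `LDLᵀ`
  -- decomposition of `A` recentred there.
  · simp only [inner_eq_fin_three, quadForm_eq, Matrix.cons_val_zero, Matrix.cons_val_one,
      Matrix.cons_val]
    nlinarith [sq_nonneg ((x 0 - 6 / 13) + (x 1 - 8 / 13) / 3 + x 2 / 6),
      sq_nonneg ((x 1 - 8 / 13) + 6 / 13 * x 2), sq_nonneg (x 2),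
      mul_nonneg (by norm_num : (0 : ℝ) ≤ 30 / 13) (hx 2)]
  -- The maximiser is interior: `A⁻¹ (3, 4, 3) = (16, 29, 17) / 57`.
  · simp only [inner_eq_fin_three, quadForm_eq, Matrix.cons_val_zero, Matrix.cons_val_one,
      Matrix.cons_val]
    nlinarith [sq_nonneg ((x 0 - 16 / 57) + (x 1 - 29 / 57) / 3 + (x 2 - 17 / 57) / 6),
      sq_nonneg ((x 1 - 29 / 57) + 6 / 13 * (x 2 - 17 / 57)), sq_nonneg (x 2 - 17 / 57)]

theorem ofReal_le_monotoneConjNN_quadForm_add :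
    ENNReal.ofReal (93 / 52 + 43 / 19) ≤
      monotoneConjNN 3 quadForm !₂[3, 4, 0] + monotoneConjNN 3 quadForm !₂[4, 4, 3] := by
  -- Test points: the maximiser of the `2 × 2` block of `A` on the face `x 2 = 0`, and
  -- `A⁻¹ (4, 4, 3)`.
  have h₁ := ofReal_le_monotoneConjNN quadForm !₂[3, 4, 0] (x := !₂[7 / 26, 9 / 13, 0])
    (by intro i; fin_cases i <;> norm_num)
  have h₂ := ofReal_le_monotoneConjNN quadForm !₂[4, 4, 3] (x := !₂[9 / 19, 8 / 19, 6 / 19])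
    (by intro i; fin_cases i <;> norm_num)
  rw [ENNReal.ofReal_add (by norm_num) (by norm_num)]
  refine add_le_add (le_of_eq_of_le ?_ h₁) (le_of_eq_of_le ?_ h₂) <;>
    norm_num [inner_eq_fin_three, quadForm_eq, Matrix.cons_val_two]

theorem monotoneRearrangement_uniformOnThree :
    monotoneRearrangement 3 (uniformOnThree 0 !₂[4, 4, 0] !₂[3, 4, 3]) =
      uniformOnThree 0 !₂[3, 4, 0] !₂[4, 4, 3] := by
  refine map_volume_Ioo_eq_uniformOnThree (fun u hu => ?_) (fun u hu => ?_) (fun u hu => ?_) <;>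
    ext d
  · fin_cases d <;> exact cdfInv_uniformOnThree (k := 0) _ _ _ _ (by norm_num)
      (by push_cast; linarith [hu.1]) (by push_cast; linarith [hu.2]) (by norm_num) (by norm_num)
  · fin_cases d <;> exact cdfInv_uniformOnThree (k := 1) _ _ _ _ (by norm_num)
      (by push_cast; linarith [hu.1]) (by push_cast; linarith [hu.2]) (by norm_num) (by norm_num)
  · fin_cases d <;> exact cdfInv_uniformOnThree (k := 2) _ _ _ _ (by norm_num)
      (by push_cast; linarith [hu.1]) (by push_cast; linarith [hu.2]) (by norm_num) (by norm_num)

/-- the quadratic form `ξ(x) = (x·Ax)/2` is convex on `ℝ³`, and there is a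
probability measure `μ` on `ℝ_+³`, uniform on three points, with `∫ ξ* dμ↑ > ∫ ξ* dμ`. -/
theorem rearrangement_counterexample :
    ConvexOn ℝ Set.univ quadForm ∧
    ∃ y₀ y₁ y₂ : EuclideanSpace ℝ (Fin 3),
      (∀ i, 0 ≤ y₀ i) ∧ (∀ i, 0 ≤ y₁ i) ∧ (∀ i, 0 ≤ y₂ i) ∧
      (∫⁻ y, monotoneConjNN 3 quadForm y
          ∂((3 : ℝ≥0∞)⁻¹ • (Measure.dirac y₀ + Measure.dirac y₁ + Measure.dirac y₂)) <
        ∫⁻ y, monotoneConjNN 3 quadForm y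
          ∂(monotoneRearrangement 3
            ((3 : ℝ≥0∞)⁻¹ • (Measure.dirac y₀ + Measure.dirac y₁ + Measure.dirac y₂)))) := by
  refine ⟨convexOn_quadForm, 0, !₂[4, 4, 0], !₂[3, 4, 3], by simp, ?_, ?_, ?_⟩
  · intro i; fin_cases i <;> norm_num
  · intro i; fin_cases i <;> norm_num
  change ∫⁻ y, _ ∂uniformOnThree _ _ _ < ∫⁻ y, _ ∂monotoneRearrangement 3 (uniformOnThree _ _ _)
  rw [monotoneRearrangement_uniformOnThree, lintegral_uniformOnThree, lintegral_uniformOnThree,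
    monotoneConjNN_quadForm_zero, zero_add, zero_add]
  refine ENNReal.mul_lt_mul_right (by norm_num) (by norm_num) ?_
  calc _ ≤ ENNReal.ofReal (28 / 13 + 215 / 114) := monotoneConjNN_quadForm_add_le
    _ < ENNReal.ofReal (93 / 52 + 43 / 19) := by
      rw [ENNReal.ofReal_lt_ofReal_iff (by norm_num)]
      norm_num
    _ ≤ _ := ofReal_le_monotoneConjNN_quadForm_add
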